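/- Let a > 0, let M ≥ 1, let g_0,…,g_{M−1} and θ_0,…,θ_{M−1} be real numbers satisfying the compatibility conditions Σ_{k=0}^{M−1} g_k e^{−iθ_k} = 0 and Σ_{k=0}^{M−1} g_k e^{−2iθ_k} = 0. Then for every β ∈ ℝ and every σ ∈ ℝ such that e^{(a+i)σ + i(θ_k − β)} ≠ 1 for all k, one has Σ_{k=0}^{M−1} g_k · e^{2aσ}/(1 − e^{(a+i)σ + i(θ_k−β)}) = Σ_{k=0}^{M−1} g_k · e^{−2iσ − 2i(θ_k−β)}/(1 − e^{(a+i)σ + i(θ_k−β)}). -/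
import Mathlib


/-- Let `a > 0`, `M ≥ 1`, and let `g_k, θ_k` be real numbers satisfying
the compatibility conditions `Σ_k g_k e^{−iθ_k} = 0` and `Σ_k g_k e^{−2iθ_k} = 0`.  Then
for every `β ∈ ℝ` and every `σ ∈ ℝ` with `e^{(a+i)σ + i(θ_k−β)} ≠ 1` for all `k`,
`Σ_k g_k e^{2aσ}/(1 − e^{(a+i)σ+i(θ_k−β)}) = Σ_k g_k e^{−2iσ−2i(θ_k−β)}/(1 − e^{(a+i)σ+i(θ_k−β)})`. -/
theorem integrand_identity (a : ℝ) (ha : 0 < a) (M : ℕ) (hM : 1 ≤ M)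
    (g θs : Fin M → ℝ)
    (hc1 : ∑ k : Fin M, (g k : ℂ) * Complex.exp (-Complex.I * (θs k : ℂ)) = 0)
    (hc2 : ∑ k : Fin M, (g k : ℂ) * Complex.exp (-2 * Complex.I * (θs k : ℂ)) = 0)
    (β σ : ℝ)
    (hden : ∀ k : Fin M,
      Complex.exp (((a : ℂ) + Complex.I) * (σ : ℂ) +
        Complex.I * ((θs k : ℂ) - (β : ℂ))) ≠ 1) :
    (∑ k : Fin M, (g k : ℂ) * Complex.exp (2 * (a : ℂ) * (σ : ℂ)) /
        (1 - Complex.exp (((a : ℂ) + Complex.I) * (σ : ℂ) +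
          Complex.I * ((θs k : ℂ) - (β : ℂ))))) =
      ∑ k : Fin M, (g k : ℂ) *
          Complex.exp (-2 * Complex.I * (σ : ℂ) - 2 * Complex.I * ((θs k : ℂ) - (β : ℂ))) /
        (1 - Complex.exp (((a : ℂ) + Complex.I) * (σ : ℂ) +
          Complex.I * ((θs k : ℂ) - (β : ℂ)))) := by
  rw [← sub_eq_zero, ← Finset.sum_sub_distrib]
  have key : ∀ k : Fin M,
      (g k : ℂ) * Complex.exp (2 * (a : ℂ) * (σ : ℂ)) /
        (1 - Complex.exp (((a : ℂ) + Complex.I) * (σ : ℂ) +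
          Complex.I * ((θs k : ℂ) - (β : ℂ)))) -
      (g k : ℂ) *
          Complex.exp (-2 * Complex.I * (σ : ℂ) - 2 * Complex.I * ((θs k : ℂ) - (β : ℂ))) /
        (1 - Complex.exp (((a : ℂ) + Complex.I) * (σ : ℂ) +
          Complex.I * ((θs k : ℂ) - (β : ℂ)))) =
      -(Complex.exp (-2 * Complex.I * (σ : ℂ) + 2 * Complex.I * (β : ℂ)) *
          ((g k : ℂ) * Complex.exp (-2 * Complex.I * (θs k : ℂ))) +
        Complex.exp (((a : ℂ) - Complex.I) * (σ : ℂ) + Complex.I * (β : ℂ)) *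
          ((g k : ℂ) * Complex.exp (-Complex.I * (θs k : ℂ)))) := by
    intro k
    set w : ℂ := ((a : ℂ) + Complex.I) * (σ : ℂ) + Complex.I * ((θs k : ℂ) - (β : ℂ)) with hw
    have h1 : (1 : ℂ) - Complex.exp w ≠ 0 := sub_ne_zero.mpr (Ne.symm (hden k))
    have hA : Complex.exp (2 * (a : ℂ) * (σ : ℂ)) =
        Complex.exp (-2 * Complex.I * (σ : ℂ) - 2 * Complex.I * ((θs k : ℂ) - (β : ℂ))) *
          Complex.exp w * Complex.exp w := by
      rw [← Complex.exp_add, ← Complex.exp_add]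
      congr 1
      rw [hw]; ring
    have hB : Complex.exp (-2 * Complex.I * (σ : ℂ) - 2 * Complex.I * ((θs k : ℂ) - (β : ℂ))) =
        Complex.exp (-2 * Complex.I * (σ : ℂ) + 2 * Complex.I * (β : ℂ)) *
          Complex.exp (-2 * Complex.I * (θs k : ℂ)) := by
      rw [← Complex.exp_add]; congr 1; ring
    have hC : Complex.exp (-2 * Complex.I * (σ : ℂ) - 2 * Complex.I * ((θs k : ℂ) - (β : ℂ))) *
        Complex.exp w =
        Complex.exp (((a : ℂ) - Complex.I) * (σ : ℂ) + Complex.I * (β : ℂ)) *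
          Complex.exp (-Complex.I * (θs k : ℂ)) := by
      rw [← Complex.exp_add, ← Complex.exp_add]; congr 1; rw [hw]; ring
    rw [div_sub_div_same, div_eq_iff h1]
    linear_combination (g k : ℂ) * hA +
      ((g k : ℂ) * Complex.exp w - (g k : ℂ)) * hB +
      ((g k : ℂ) * Complex.exp w - (g k : ℂ)) * hC
  simp only [neg_mul] at hc1 hc2
  simp only [key]
  simp [Finset.sum_add_distrib, ← Finset.mul_sum, hc1, hc2]
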